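/- arXiv:2207.10284 — 2 statements merged into one kernel-verified Lean document; each statement's English description precedes it below -/
import Mathlib

section
/- Fix a scale s ∈ {1,2,4,…,n} and block indices x, y ∈ {1,…,n/s}. Suppose there exist a ∈ ℝ and r ≥ 0 such that P_{i,j} ∈ [a, a + r] for all (i, j) in the support of B^s_{x,y}. Then ∑_{(i,j) ∈ supp(B^s_{x,y})} (μ_{s,x,y} − exp(P_{i,j}))² ≤ C_{2r} · s² · μ_{s,x,y}², where C_{2r} = 1 + exp(2r) − 2 exp(r). -/
open scoped BigOperators

/-- The block component `B^s_{x,y}` (0-based block indices `x, y`). -/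
def blockMat (n s x y : ℕ) : Matrix (Fin n) (Fin n) ℝ :=
  Matrix.of fun i j => if i.val / s = x ∧ j.val / s = y then (1 : ℝ) else 0

/-- Frobenius (entrywise) inner product of two matrices. -/
noncomputable def frobInner {n : ℕ} (M N : Matrix (Fin n) (Fin n) ℝ) : ℝ :=
  ∑ i, ∑ j, M i j * N i j

/-!
The mean `m` of `P` over the block lies in `[a, a + r]`, and `μ = exp m` because the block has
exactly `s²` entries. Every `exp P_{ij}` with `(i, j)` in the block then differs from `μ` by at
most `exp (a + r) - exp a = exp a (exp r - 1) ≤ μ (exp r - 1)`, and `C_{2r} = (exp r - 1)²`.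
-/

open Finset Real

lemma sq_exp_sub_exp_le_of_mem_Icc {a r u v : ℝ} (hu : u ∈ Set.Icc a (a + r))
    (hv : v ∈ Set.Icc a (a + r)) : (exp u - exp v) ^ 2 ≤ (exp r - 1) ^ 2 * exp u ^ 2 := by
  have hua : exp a ≤ exp u := exp_le_exp.2 hu.1
  have hva : exp a ≤ exp v := exp_le_exp.2 hv.1
  have hur : exp u ≤ exp a * exp r := exp_add a r ▸ exp_le_exp.2 hu.2
  have hvr : exp v ≤ exp a * exp r := exp_add a r ▸ exp_le_exp.2 hv.2
  have hr : 1 ≤ exp r := one_le_exp (by linarith [hu.1, hu.2])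
  rw [← mul_pow]
  refine sq_le_sq' ?_ ?_ <;> nlinarith [exp_pos a]

lemma sum_sq_exp_expect_sub_exp_le {ι : Type*} {F : Finset ι} (hF : F.Nonempty) {f : ι → ℝ}
    {a r : ℝ} (hf : ∀ i ∈ F, f i ∈ Set.Icc a (a + r)) :
    ∑ i ∈ F, (exp (𝔼 j ∈ F, f j) - exp (f i)) ^ 2 ≤
      (exp r - 1) ^ 2 * #F * exp (𝔼 j ∈ F, f j) ^ 2 := by
  have hmean : 𝔼 j ∈ F, f j ∈ Set.Icc a (a + r) :=
    ⟨le_expect hF fun i hi => (hf i hi).1, expect_le hF fun i hi => (hf i hi).2⟩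
  calc ∑ i ∈ F, (exp (𝔼 j ∈ F, f j) - exp (f i)) ^ 2
      ≤ #F • ((exp r - 1) ^ 2 * exp (𝔼 j ∈ F, f j) ^ 2) :=
        sum_le_card_nsmul _ _ _ fun i hi => sq_exp_sub_exp_le_of_mem_Icc hmean (hf i hi)
    _ = (exp r - 1) ^ 2 * #F * exp (𝔼 j ∈ F, f j) ^ 2 := by rw [nsmul_eq_mul]; ring

lemma Nat.pos_of_lt_div {n s x : ℕ} (h : x < n / s) : 0 < s :=
  Nat.pos_of_ne_zero (by rintro rfl; simp at h)

lemma Fin.card_filter_val_div_eq {n s x : ℕ} (hx : x < n / s) :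
    #{i : Fin n | i.val / s = x} = s := by
  have hs : 0 < s := Nat.pos_of_lt_div hx
  have hxs : x * s + s ≤ n := by have := (Nat.lt_div_iff_mul_lt hs).1 hx; omega
  have hsplit : ({i | i.val / s = x} : Finset (Fin n)) =
      ({i | i.val < x * s + s} : Finset (Fin n)) \ ({i | i.val < x * s} : Finset (Fin n)) := by
    ext i
    simp only [mem_sdiff, mem_filter, mem_univ, true_and, Nat.div_eq_iff hs]
    omega
  have hsub :
      ({i | i.val < x * s} : Finset (Fin n)) ⊆ ({i | i.val < x * s + s} : Finset (Fin n)) :=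
    monotone_filter_right _ fun _ _ h => by omega
  rw [hsplit, card_sdiff_of_subset hsub, Fin.card_filter_val_lt, Fin.card_filter_val_lt]
  omega

lemma Fin.card_filter_prod_val_div_eq {n s x y : ℕ} (hx : x < n / s) (hy : y < n / s) :
    #{ij : Fin n × Fin n | ij.1.val / s = x ∧ ij.2.val / s = y} = s ^ 2 := by
  rw [← univ_product_univ, filter_product (p := fun i : Fin n => i.val / s = x)
    (q := fun j : Fin n => j.val / s = y), card_product, Fin.card_filter_val_div_eq hx,
    Fin.card_filter_val_div_eq hy, sq]

lemma frobInner_blockMat {n : ℕ} (s x y : ℕ) (P : Matrix (Fin n) (Fin n) ℝ) :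
    frobInner (blockMat n s x y) P =
      ∑ ij ∈ {ij : Fin n × Fin n | ij.1.val / s = x ∧ ij.2.val / s = y}, P ij.1 ij.2 := by
  simp [frobInner, blockMat, sum_filter, Fintype.sum_prod_type, ite_mul]

theorem block_squared_error_bound_general
    (n : ℕ)
    (P : Matrix (Fin n) (Fin n) ℝ)
    (s : ℕ)
    (x y : ℕ) (hx : x < n / s) (hy : y < n / s)
    (r : ℝ)
    (ha : ∃ a : ℝ, ∀ i j : Fin n, i.val / s = x → j.val / s = y →
      P i j ∈ Set.Icc a (a + r))
    (μ : ℝ) (hμ : μ = Real.exp ((1 / (s : ℝ) ^ 2) * frobInner (blockMat n s x y) P)) :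
    ∑ ij ∈ Finset.univ.filter
        (fun ij : Fin n × Fin n => ij.1.val / s = x ∧ ij.2.val / s = y),
      (μ - Real.exp (P ij.1 ij.2)) ^ 2 ≤
      (1 + Real.exp (2 * r) - 2 * Real.exp r) * (s : ℝ) ^ 2 * μ ^ 2 := by
  obtain ⟨a, ha⟩ := ha
  set F := ({ij | ij.1.val / s = x ∧ ij.2.val / s = y} : Finset (Fin n × Fin n))
  have hcard : (#F : ℝ) = (s : ℝ) ^ 2 := by
    rw [Fin.card_filter_prod_val_div_eq hx hy]; push_cast; rfl
  have hs : 0 < s := Nat.pos_of_lt_div hx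
  have hF : F.Nonempty := card_pos.1 (by rw [Fin.card_filter_prod_val_div_eq hx hy]; positivity)
  have hμ_mean : μ = exp (𝔼 ij ∈ F, P ij.1 ij.2) := by
    rw [hμ, expect_eq_sum_div_card, hcard, frobInner_blockMat, one_div_mul_eq_div]
  have hC : 1 + exp (2 * r) - 2 * exp r = (exp r - 1) ^ 2 := by
    rw [two_mul, exp_add]; ring
  rw [hC, ← hcard, hμ_mean]
  exact sum_sq_exp_expect_sub_exp_le hF fun ij hij =>
    ha ij.1 ij.2 (mem_filter.1 hij).2.1 (mem_filter.1 hij).2.2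

/-- If the entries of `P` over the block `supp(B^s_{x,y})` lie in an interval `[a, a + r]`,
then `∑_{(i,j) ∈ supp(B^s_{x,y})} (μ_{s,x,y} − exp(P_{i,j}))² ≤ C_{2r} s² μ_{s,x,y}²`
where `C_{2r} = 1 + exp(2r) − 2 exp(r)`. -/
theorem block_squared_error_bound
    (n d : ℕ) (hn : ∃ k : ℕ, n = 2 ^ k)
    (Q K : Matrix (Fin n) (Fin d) ℝ)
    (P : Matrix (Fin n) (Fin n) ℝ) (hP : P = Q * K.transpose)
    (s : ℕ) (hs : ∃ k : ℕ, s = 2 ^ k) (hsn : s ∣ n)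
    (x y : ℕ) (hx : x < n / s) (hy : y < n / s)
    (r : ℝ) (hr : 0 ≤ r)
    (ha : ∃ a : ℝ, ∀ i j : Fin n, i.val / s = x → j.val / s = y →
      P i j ∈ Set.Icc a (a + r))
    (μ : ℝ) (hμ : μ = Real.exp ((1 / (s : ℝ) ^ 2) * frobInner (blockMat n s x y) P)) :
    ∑ ij ∈ Finset.univ.filter
        (fun ij : Fin n × Fin n => ij.1.val / s = x ∧ ij.2.val / s = y),
      (μ - Real.exp (P ij.1 ij.2)) ^ 2 ≤
      (1 + Real.exp (2 * r) - 2 * Real.exp r) * (s : ℝ) ^ 2 * μ ^ 2 :=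
  block_squared_error_bound_general n P s x y hx hy r ha μ hμ
end

section
/- Let b ∈ {1,2,4,…,n} and partition {1,…,n}² into the (n/b)² scale-b blocks (the supports of the B^b_{x,y}). Assume r > 0 is such that for every block (x, y) there exists a (block-dependent) a ∈ ℝ with P_{i,j} ∈ [a, a + r] for all (i, j) in the support of B^b_{x,y}. Let S be a set of m₁ blocks containing m₁ largest values among {μ_{b,x,y}}, and let δ be the m₁-th largest value of μ_{b,x,y}. Define Â ∈ ℝ^{n×n} by Â_{i,j} = exp(P_{i,j}) if (i, j) lies in a block of S, and Â_{i,j} = μ_{b,x,y} if (i, j) lies in the block (x, y) ∉ S. Then ‖Â − A‖_F / ‖A‖_F ≤ sqrt( (n² − m₁ b²) · C_{2r} · δ² / ∑_{i,j=1}^n exp(2 P_{i,j}) ), where C_{2r} = 1 + exp(2r) − 2 exp(r). -/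
open scoped BigOperators

/-!
On a scale-`b` block whose entries of `P` lie in `[a, a + r]`, both `exp P_{ij}` and the block
value `μ = exp (mean of P over the block)` lie in `[e^a, e^{a+r}]`, so they differ by at most
`e^a (e^r - 1)`; off `S` we also have `e^a ≤ μ ≤ δ`, so each of the `n² - m₁ b²` entries outside
the blocks of `S` contributes at most `(e^r - 1)² δ² = C_{2r} δ²` to `‖Â - A‖_F²`, while the
entries inside contribute nothing. Finally `‖A‖_F² = ∑ exp (2 P_{ij})`.
-/

open Finset Real

def blockRows (n s x : ℕ) : Finset (Fin n) := {i | i.val / s = x}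

lemma card_blockRows {n s x : ℕ} (hsn : s ∣ n) (hx : x < n / s) :
    #(blockRows n s x) = s := by
  have hs : 0 < s := Nat.pos_of_ne_zero fun h => by simp [h] at hx
  have hxs : x * s + s ≤ n := by
    rw [← Nat.succ_mul]
    exact (Nat.mul_le_mul_right s hx).trans (Nat.div_mul_cancel hsn).le
  have himage : (blockRows n s x).map Fin.valEmbedding = Ico (x * s) (x * s + s) := by
    ext m
    simp only [blockRows, mem_map, mem_filter, mem_univ, true_and, Fin.valEmbedding_apply,
      mem_Ico]
    constructor
    · rintro ⟨i, hi, rfl⟩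
      rw [Nat.div_eq_iff hs] at hi
      omega
    · intro hm
      refine ⟨⟨m, by omega⟩, ?_, rfl⟩
      show m / s = x
      rw [Nat.div_eq_iff hs]
      omega
  rw [← card_map, himage, Nat.card_Ico, Nat.add_sub_cancel_left]

lemma frobInner_blockMat_s6 (n s x y : ℕ) (M : Matrix (Fin n) (Fin n) ℝ) :
    frobInner (blockMat n s x y) M = ∑ p ∈ blockRows n s x ×ˢ blockRows n s y, M p.1 p.2 := by
  simp only [frobInner, blockMat, Matrix.of_apply, ite_mul, one_mul, zero_mul, ite_and,
    sum_product, blockRows, sum_filter, sum_ite_irrel, sum_const_zero]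

lemma sum_div_card_mem_Icc {ι : Type*} {t : Finset ι} (ht : t.Nonempty) {f : ι → ℝ}
    {lo hi : ℝ} (hf : ∀ i ∈ t, f i ∈ Set.Icc lo hi) : (∑ i ∈ t, f i) / #t ∈ Set.Icc lo hi := by
  have hcard : (0 : ℝ) < #t := by exact_mod_cast ht.card_pos
  constructor
  · rw [le_div_iff₀ hcard, mul_comm, ← nsmul_eq_mul]
    exact card_nsmul_le_sum t f lo fun i hi => (hf i hi).1
  · rw [div_le_iff₀ hcard, mul_comm, ← nsmul_eq_mul]
    exact sum_le_card_nsmul t f hi fun i hi => (hf i hi).2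

lemma blockMean_mem_Icc {n s x y : ℕ} (hsn : s ∣ n) (hx : x < n / s) (hy : y < n / s)
    {M : Matrix (Fin n) (Fin n) ℝ} {lo hi : ℝ}
    (hM : ∀ i j : Fin n, i.val / s = x → j.val / s = y → M i j ∈ Set.Icc lo hi) :
    1 / (s : ℝ) ^ 2 * frobInner (blockMat n s x y) M ∈ Set.Icc lo hi := by
  have hcard : #(blockRows n s x ×ˢ blockRows n s y) = s ^ 2 := by
    rw [card_product, card_blockRows hsn hx, card_blockRows hsn hy, sq]
  have hs : 0 < s := Nat.pos_of_ne_zero fun h => by simp [h] at hx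
  rw [frobInner_blockMat_s6, one_div_mul_eq_div, ← Nat.cast_pow, ← hcard]
  refine sum_div_card_mem_Icc (card_pos.mp (by rw [hcard]; positivity)) fun p hp => ?_
  simp only [mem_product, blockRows, mem_filter, mem_univ, true_and] at hp
  exact hM p.1 p.2 hp.1 hp.2

lemma sq_exp_sub_exp_le {a r u v δ : ℝ} (hu : u ∈ Set.Icc a (a + r))
    (hv : v ∈ Set.Icc a (a + r)) (hδ : exp u ≤ δ) :
    (exp u - exp v) ^ 2 ≤ (1 + exp (2 * r) - 2 * exp r) * δ ^ 2 := by
  have hexp {w : ℝ} (hw : w ∈ Set.Icc a (a + r)) :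
      exp w ∈ Set.Icc (exp a) (exp a * exp r) := by
    rw [← exp_add]
    exact ⟨exp_le_exp.mpr hw.1, exp_le_exp.mpr hw.2⟩
  have hdist : |exp u - exp v| ≤ exp a * exp r - exp a :=
    Real.dist_le_of_mem_Icc (hexp hu) (hexp hv)
  have hC : 1 + exp (2 * r) - 2 * exp r = (exp r - 1) ^ 2 := by rw [two_mul, exp_add]; ring
  have hea : exp a ≤ δ := (exp_le_exp.mpr hu.1).trans hδ
  calc (exp u - exp v) ^ 2 ≤ (exp a * exp r - exp a) ^ 2 :=
        sq_le_sq' (abs_le.mp hdist).1 (abs_le.mp hdist).2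
    _ = (exp r - 1) ^ 2 * exp a ^ 2 := by ring
    _ ≤ (exp r - 1) ^ 2 * δ ^ 2 := by gcongr
    _ = _ := by rw [hC]

lemma card_filter_div_mem {n s : ℕ} (hsn : s ∣ n) {S : Finset (ℕ × ℕ)}
    (hS : S ⊆ range (n / s) ×ˢ range (n / s)) :
    #{p : Fin n × Fin n | (p.1.val / s, p.2.val / s) ∈ S} = #S * s ^ 2 := by
  rw [card_eq_sum_card_fiberwise (f := fun p : Fin n × Fin n => (p.1.val / s, p.2.val / s))
    (s := {p | (p.1.val / s, p.2.val / s) ∈ S}) (t := S) fun p hp => (mem_filter.mp hp).2,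
    ← smul_eq_mul, ← sum_const]
  refine sum_congr rfl fun q hq => ?_
  obtain ⟨hq₁, hq₂⟩ := mem_product.mp (hS hq)
  have hfiber : ({p | (p.1.val / s, p.2.val / s) ∈ S} : Finset (Fin n × Fin n)).filter
      (fun p => (p.1.val / s, p.2.val / s) = q) = blockRows n s q.1 ×ˢ blockRows n s q.2 := by
    ext p
    simp only [mem_filter, mem_univ, true_and, mem_product, blockRows, Prod.ext_iff]
    constructor
    · exact fun h => h.2
    · intro h
      exact ⟨(Prod.ext h.1 h.2 : (_, _) = q) ▸ hq, h⟩
  rw [hfiber, card_product, card_blockRows hsn (mem_range.mp hq₁),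
    card_blockRows hsn (mem_range.mp hq₂), sq]

lemma sum_le_of_blockwise_le {n s : ℕ} (hsn : s ∣ n) {S : Finset (ℕ × ℕ)}
    (hS : S ⊆ range (n / s) ×ˢ range (n / s)) {g : Fin n → Fin n → ℝ} {c : ℝ}
    (hin : ∀ i j : Fin n, (i.val / s, j.val / s) ∈ S → g i j = 0)
    (hout : ∀ i j : Fin n, (i.val / s, j.val / s) ∉ S → g i j ≤ c) :
    ∑ i, ∑ j, g i j ≤ ((n : ℝ) ^ 2 - #S * (s : ℝ) ^ 2) * c := by
  set T : Finset (Fin n × Fin n) := {p | (p.1.val / s, p.2.val / s) ∉ S}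
  have hcardT : (#T : ℝ) = (n : ℝ) ^ 2 - #S * (s : ℝ) ^ 2 := by
    have hsplit := card_filter_add_card_filter_not (s := (univ : Finset (Fin n × Fin n)))
      fun p => (p.1.val / s, p.2.val / s) ∈ S
    rw [card_filter_div_mem hsn hS, card_univ, Fintype.card_prod, Fintype.card_fin, ← sq]
      at hsplit
    rw [eq_sub_iff_add_eq']
    exact_mod_cast hsplit
  calc ∑ i, ∑ j, g i j = ∑ p ∈ T, g p.1 p.2 := by
        rw [← sum_product', univ_product_univ, sum_filter_of_ne]
        exact fun p _ hp hmem => hp (hin p.1 p.2 hmem)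
    _ ≤ #T • c := sum_le_card_nsmul T _ c fun p hp => hout p.1 p.2 (mem_filter.mp hp).2
    _ = _ := by rw [nsmul_eq_mul, hcardT]

theorem approx_relative_error_bound_general
    (n : ℕ)
    (P : Matrix (Fin n) (Fin n) ℝ)
    (A : Matrix (Fin n) (Fin n) ℝ) (hA : A = Matrix.of fun i j => Real.exp (P i j))
    (b : ℕ) (hbn : b ∣ n)
    (r : ℝ)
    (hrange : ∀ x y : ℕ, x < n / b → y < n / b →
      ∃ a : ℝ, ∀ i j : Fin n, i.val / b = x → j.val / b = y →
        P i j ∈ Set.Icc a (a + r))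
    (μ : ℕ × ℕ → ℝ)
    (hμ : ∀ pb : ℕ × ℕ,
      μ pb = Real.exp ((1 / (b : ℝ) ^ 2) * frobInner (blockMat n b pb.1 pb.2) P))
    (m₁ : ℕ) (S : Finset (ℕ × ℕ))
    (hS : S ⊆ Finset.range (n / b) ×ˢ Finset.range (n / b))
    (hcard : S.card = m₁)
    (hmax : ∀ pb ∈ Finset.range (n / b) ×ˢ Finset.range (n / b),
      pb ∉ S → ∀ pb' ∈ S, μ pb ≤ μ pb')
    (δ : ℝ) (hδmem : ∃ pb ∈ S, μ pb = δ)
    (Ahat : Matrix (Fin n) (Fin n) ℝ)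
    (hAhat : Ahat = Matrix.of fun i j =>
      if (i.val / b, j.val / b) ∈ S then Real.exp (P i j)
      else μ (i.val / b, j.val / b)) :
    Real.sqrt (∑ i, ∑ j, (Ahat i j - A i j) ^ 2) /
        Real.sqrt (∑ i, ∑ j, (A i j) ^ 2) ≤
      Real.sqrt (((n : ℝ) ^ 2 - (m₁ : ℝ) * (b : ℝ) ^ 2) *
        (1 + Real.exp (2 * r) - 2 * Real.exp r) * δ ^ 2 /
        (∑ i, ∑ j, Real.exp (2 * P i j))) := by
  subst hcard
  obtain ⟨q, hq, rfl⟩ := hδmem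
  have hentry (i j : Fin n) (hij : (i.val / b, j.val / b) ∉ S) :
      (Ahat i j - A i j) ^ 2 ≤ (1 + exp (2 * r) - 2 * exp r) * μ q ^ 2 := by
    have hx := Nat.div_lt_div_of_lt_of_dvd hbn i.isLt
    have hy := Nat.div_lt_div_of_lt_of_dvd hbn j.isLt
    obtain ⟨a, ha⟩ := hrange _ _ hx hy
    have hle := hmax _ (mem_product.mpr ⟨mem_range.mpr hx, mem_range.mpr hy⟩) hij q hq
    rw [hμ] at hle
    rw [hAhat, hA, Matrix.of_apply, Matrix.of_apply, if_neg hij, hμ]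
    exact sq_exp_sub_exp_le (blockMean_mem_Icc hbn hx hy ha) (ha i j rfl rfl) hle
  have herr := sum_le_of_blockwise_le hbn hS (fun i j hij => by simp [hAhat, hA, hij]) hentry
  have hnorm : ∑ i, ∑ j, A i j ^ 2 = ∑ i, ∑ j, exp (2 * P i j) := by
    simp only [hA, Matrix.of_apply, ← exp_nat_mul, Nat.cast_ofNat]
  rw [hnorm, ← sqrt_div' _ (by positivity), mul_assoc _ _ (μ q ^ 2)]
  exact sqrt_le_sqrt (div_le_div_of_nonneg_right herr (by positivity))

/-- Proposition 4.2: for the two-scale approximation `Â` (exact on the `m₁` blocks of `S`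
with the largest `μ_{b,x,y}`, block-average `μ_{b,x,y}` elsewhere), with `δ` the `m₁`-th
largest block value (the minimum of `μ` over `S`) and entries of `P` on each block lying
in an interval of length `r`,
`‖Â − A‖_F / ‖A‖_F ≤ sqrt((n² − m₁ b²) C_{2r} δ² / ∑_{i,j} exp(2 P_{i,j}))`,
where `C_{2r} = 1 + exp(2r) − 2 exp(r)`. -/
theorem approx_relative_error_bound
    (n d : ℕ) (hn : ∃ k : ℕ, n = 2 ^ k)
    (Q K : Matrix (Fin n) (Fin d) ℝ)
    (P : Matrix (Fin n) (Fin n) ℝ) (hP : P = Q * K.transpose)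
    (A : Matrix (Fin n) (Fin n) ℝ) (hA : A = Matrix.of fun i j => Real.exp (P i j))
    (b : ℕ) (hb : ∃ k : ℕ, b = 2 ^ k) (hbn : b ∣ n)
    (r : ℝ) (hr : 0 < r)
    (hrange : ∀ x y : ℕ, x < n / b → y < n / b →
      ∃ a : ℝ, ∀ i j : Fin n, i.val / b = x → j.val / b = y →
        P i j ∈ Set.Icc a (a + r))
    (μ : ℕ × ℕ → ℝ)
    (hμ : ∀ pb : ℕ × ℕ,
      μ pb = Real.exp ((1 / (b : ℝ) ^ 2) * frobInner (blockMat n b pb.1 pb.2) P))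
    (m₁ : ℕ) (S : Finset (ℕ × ℕ))
    (hS : S ⊆ Finset.range (n / b) ×ˢ Finset.range (n / b))
    (hcard : S.card = m₁)
    (hmax : ∀ pb ∈ Finset.range (n / b) ×ˢ Finset.range (n / b),
      pb ∉ S → ∀ pb' ∈ S, μ pb ≤ μ pb')
    (δ : ℝ) (hδle : ∀ pb ∈ S, δ ≤ μ pb) (hδmem : ∃ pb ∈ S, μ pb = δ)
    (Ahat : Matrix (Fin n) (Fin n) ℝ)
    (hAhat : Ahat = Matrix.of fun i j =>
      if (i.val / b, j.val / b) ∈ S then Real.exp (P i j)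
      else μ (i.val / b, j.val / b)) :
    Real.sqrt (∑ i, ∑ j, (Ahat i j - A i j) ^ 2) /
        Real.sqrt (∑ i, ∑ j, (A i j) ^ 2) ≤
      Real.sqrt (((n : ℝ) ^ 2 - (m₁ : ℝ) * (b : ℝ) ^ 2) *
        (1 + Real.exp (2 * r) - 2 * Real.exp r) * δ ^ 2 /
        (∑ i, ∑ j, Real.exp (2 * P i j))) :=
  approx_relative_error_bound_general n P A hA b hbn r hrange μ hμ m₁ S hS hcard hmax δ hδmem Ahat
    hAhat
end
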